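/- For all positive integers ℓ and m, f_{ℓ,m}(1) = Σ_{α=0}^{m} C(m, α) Σ_{β=0}^{ℓ−1} C(ℓ+α−1, β) C(ℓ+m−α−1, β); that is, Σ_{k=0}^{ℓ+m−1} Σ_{α=0}^{k} C(ℓ−1, k−α) C(m, α) Σ_{β=α}^{k} C(ℓ+α−1, β) C(m−α, k−β) = Σ_{α=0}^{m} C(m, α) Σ_{β=0}^{ℓ−1} C(ℓ+α−1, β) C(ℓ+m−α−1, β). -/

import Mathlib

/-!
Write the summation indices as `β = α + i` and `k = α + i + j`. The sum over `j` is a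
Vandermonde convolution, `Σ_j C(ℓ-1, i+j) C(m-α, j) = C(ℓ+m-α-1, ℓ-1-i)`, and
`C(ℓ+α-1, α+i) = C(ℓ+α-1, ℓ-1-i)`; the substitution `i ↦ ℓ-1-i` then yields the right-hand side.
-/

open SimpleGraph Polynomial

namespace PQPaper

instance instFintypeLex {α : Type*} [h : Fintype α] : Fintype (Lex α) := h

/-- The bipartite graph `D(G)` on `V ⊕ V`: edges `{i, ī}` for every vertex `i`,
and `{i, j̄}`, `{ī, j}` for every edge `{i, j}` of `G`. -/
def DG {V : Type*} (G : SimpleGraph V) : SimpleGraph (V ⊕ V) :=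
  SimpleGraph.fromRel fun a b =>
    match a, b with
    | Sum.inl i, Sum.inr j => i = j ∨ G.Adj i j
    | _, _ => False

/-- `f : V → ℕ` is a hypertree of the bipartite graph `H` on `V ⊕ W`
(with hyperedge side `V`): `H` has a spanning tree whose degree at each
left vertex `v` is `f v + 1`. -/
def IsHypertree {V W : Type*} (H : SimpleGraph (V ⊕ W)) (f : V → ℕ) : Prop :=
  ∃ T : SimpleGraph (V ⊕ W), T ≤ H ∧ T.IsTree ∧
    ∀ v : V, (T.neighborSet (Sum.inl v)).ncard = f v + 1

/-- The set of hypertrees of `H`. -/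
def HT {V W : Type*} (H : SimpleGraph (V ⊕ W)) : Set (V → ℕ) :=
  {f | IsHypertree H f}

/-- The set of internally inactive hyperedges of a hypertree `f`. -/
def inactive {V W : Type*} [LT V] (H : SimpleGraph (V ⊕ W)) (f : V → ℕ) : Set V :=
  {j | ∃ j', j' < j ∧ ∃ g : V → ℕ,
    g j' = f j' + 1 ∧ (g j : ℤ) = (f j : ℤ) - 1 ∧
    (∀ i, i ≠ j' → i ≠ j → g i = f i) ∧ IsHypertree H g}

/-- The interior polynomial `I_H(x) = Σ_{f ∈ HT(H)} x^{ῑ(f)}`. -/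
noncomputable def interiorPoly {V W : Type*} [Fintype V] [LinearOrder V]
    (H : SimpleGraph (V ⊕ W)) : Polynomial ℤ :=
  ∑ k ∈ Finset.range (Fintype.card V + 1),
    Polynomial.C ({f | f ∈ HT H ∧ (inactive H f).ncard = k}.ncard : ℤ) * Polynomial.X ^ k

/-- The perfectly matchable sets of a graph: vertex sets of matchings of `H`. -/
def PMSets {V : Type*} (H : SimpleGraph V) : Set (Set V) :=
  {S | ∃ M : H.Subgraph, M.IsMatching ∧ M.verts = S}

/-- The perfectly matchable set polynomial `p(H,x) = Σ_k |PM(H,k)| x^k`. -/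
noncomputable def pmsPoly {V : Type*} [Fintype V] (H : SimpleGraph V) : Polynomial ℤ :=
  ∑ k ∈ Finset.range (Fintype.card V + 1),
    Polynomial.C ({S | S ∈ PMSets H ∧ S.ncard = 2 * k}.ncard : ℤ) * Polynomial.X ^ k

/-- Join of two vertex-disjoint graphs. -/
def sumJoin {V W : Type*} (G : SimpleGraph V) (H : SimpleGraph W) : SimpleGraph (V ⊕ W) where
  Adj a b :=
    match a, b with
    | Sum.inl x, Sum.inl y => G.Adj x y
    | Sum.inr x, Sum.inr y => H.Adj x y
    | Sum.inl _, Sum.inr _ => True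
    | Sum.inr _, Sum.inl _ => True
  symm := by
    refine ⟨?_⟩
    rintro (x | x) (y | y) h
    · exact G.adj_symm h
    · exact trivial
    · exact trivial
    · exact H.adj_symm h
  loopless := by
    refine ⟨?_⟩
    rintro (x | x) h
    · exact G.loopless.irrefl x h
    · exact H.loopless.irrefl x h

/-- Join of a family of pairwise vertex-disjoint graphs. -/
def sigmaJoin {ι : Type*} {V : ι → Type*} (G : ∀ i, SimpleGraph (V i)) :
    SimpleGraph (Σ i, V i) :=
  SimpleGraph.fromRel fun a b =>
    a.1 ≠ b.1 ∨ ∃ (i : ι) (x y : V i), a = ⟨i, x⟩ ∧ b = ⟨i, y⟩ ∧ (G i).Adj x y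

/-- A copy of a graph on the lexicographic type synonym of its vertex type. -/
def lexify {α : Type*} (G : SimpleGraph α) : SimpleGraph (Lex α) :=
  G.map toLex.toEmbedding

/-- The polynomial
`f_{ℓ,m}(x) = Σ_{k=0}^{ℓ+m−1} Σ_{α=0}^{k} C(ℓ−1,k−α) C(m,α) Σ_{β=α}^{k} C(ℓ+α−1,β) C(m−α,k−β) x^k`. -/
noncomputable def fPoly (l m : ℕ) : Polynomial ℤ :=
  ∑ k ∈ Finset.range (l + m),
    Polynomial.C (∑ a ∈ Finset.range (k + 1),
      ((l - 1).choose (k - a) : ℤ) * (m.choose a : ℤ) *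
        ∑ b ∈ Finset.Icc a k, ((l + a - 1).choose b : ℤ) * ((m - a).choose (k - b) : ℤ)) *
      Polynomial.X ^ k

/-- The cycle graph on `n` vertices. -/
def cycG (n : ℕ) : SimpleGraph (Fin n) :=
  SimpleGraph.fromRel fun a b =>
    (b : ℕ) = (a : ℕ) + 1 ∨ ((a : ℕ) = n - 1 ∧ (b : ℕ) = 0)

/-- `Γ(V')`: the set of neighbours in `D(H)` of the left vertices in `V'`,
viewed as a subset of the right copy `[m̄]`. -/
def Gam {m : ℕ} (H : SimpleGraph (Fin m)) (V' : Set (Fin m)) : Set (Fin m) :=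
  {j | ∃ i ∈ V', (DG H).Adj (Sum.inl i) (Sum.inr j)}

/-- Condition (ii): `Σ_{i ∈ V'} f(i) ≤ |Γ(V')| − 1` for every nonempty `V' ⊆ [m]`. -/
def cond2 {m : ℕ} (H : SimpleGraph (Fin m)) (f : Fin m → ℕ) : Prop :=
  ∀ V' : Finset (Fin m), V'.Nonempty →
    (∑ i ∈ V', f i) + 1 ≤ (Gam H (V' : Set (Fin m))).ncard

/-- `F_H`: functions satisfying conditions (i) and (ii) for `D(H)`. -/
def FSet {m : ℕ} (H : SimpleGraph (Fin m)) : Set (Fin m → ℕ) :=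
  {f | (∑ i, f i) = m - 1 ∧ cond2 H f}

/-- `η_H(f)`: indices `j` admitting `j' < j` such that the transfer of one unit
from `j` to `j'` again satisfies condition (ii). -/
def eta {m : ℕ} (H : SimpleGraph (Fin m)) (f : Fin m → ℕ) : Set (Fin m) :=
  {j | ∃ j', j' < j ∧ ∃ g : Fin m → ℕ,
    g j' = f j' + 1 ∧ (g j : ℤ) = (f j : ℤ) - 1 ∧
    (∀ i, i ≠ j' → i ≠ j → g i = f i) ∧ cond2 H g}

/-- `F_H(k) = {f ∈ F_H : |η_H(f)| = k}`. -/
def FSetK {m : ℕ} (H : SimpleGraph (Fin m)) (k : ℕ) : Set (Fin m → ℕ) :=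
  {f | f ∈ FSet H ∧ (eta H f).ncard = k}

/-- All edges between `{1,…,m1}` and `{m1+1,…,m}` in `Fin m`. -/
def crossGraph (m m1 : ℕ) : SimpleGraph (Fin m) :=
  SimpleGraph.fromRel fun a b => (a : ℕ) < m1 ∧ m1 ≤ (b : ℕ)

/-- The complete graph on the first `m1` vertices of `Fin m`. -/
def leftComplete (m m1 : ℕ) : SimpleGraph (Fin m) :=
  SimpleGraph.fromRel fun a b => (a : ℕ) < m1 ∧ (b : ℕ) < m1

/-- The complete graph on the last `m − m1` vertices of `Fin m`. -/
def rightComplete (m m1 : ℕ) : SimpleGraph (Fin m) :=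
  SimpleGraph.fromRel fun a b => m1 ≤ (a : ℕ) ∧ m1 ≤ (b : ℕ)

/-- The tilde construction: a bipartite graph `H` on `V ⊕ W` together with two
new vertices `u = inr 0` and `w = inr 1`, where `u` is joined to all of `V` and
`w` is joined to all of `W` and to `u`. -/
def tilde {V W : Type*} (H : SimpleGraph (V ⊕ W)) : SimpleGraph ((V ⊕ W) ⊕ Fin 2) :=
  SimpleGraph.fromRel fun a b =>
    (∃ x y, a = Sum.inl x ∧ b = Sum.inl y ∧ H.Adj x y) ∨
    (∃ i : V, a = Sum.inl (Sum.inl i) ∧ b = Sum.inr 0) ∨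
    (∃ j : W, a = Sum.inl (Sum.inr j) ∧ b = Sum.inr 1) ∨
    (a = Sum.inr 0 ∧ b = Sum.inr 1)

open Finset

theorem sum_range_choose_add_mul_choose (p q i n : ℕ) (hi : i ≤ p) (hn : p - i < n) :
    ∑ j ∈ range n, p.choose (i + j) * q.choose j = (p + q).choose (p - i) := by
  have hvanish : ∀ j ∈ range n, j ∉ range (p - i + 1) → p.choose (i + j) * q.choose j = 0 :=
    fun j _ hj => by
      rw [mem_range] at hj
      rw [Nat.choose_eq_zero_of_lt (by omega), zero_mul]
  rw [← sum_subset (range_subset_range.2 (by omega)) hvanish, add_comm p q, Nat.add_choose_eq,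
    Nat.sum_antidiagonal_eq_sum_range_succ_mk]
  refine sum_congr rfl fun j hj => ?_
  rw [mem_range] at hj
  rw [mul_comm, ← Nat.choose_symm (by omega : i + j ≤ p)]
  congr 2
  omega

theorem sum_range_choose_mul_sum_choose_mul_choose (p q r n : ℕ) (hn : p < n) :
    ∑ t ∈ range n,
        p.choose t * ∑ i ∈ range (t + 1), (p + r).choose (r + i) * q.choose (t - i) =
      ∑ b ∈ range (p + 1), (p + r).choose b * (p + q).choose b := by
  have hvanish : ∀ i ∈ range n, i ∉ range (p + 1) →
      (p + r).choose (r + i) * ∑ j ∈ range (n - i), p.choose (i + j) * q.choose j = 0 :=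
    fun i _ hi => by
      rw [mem_range] at hi
      rw [Nat.choose_eq_zero_of_lt (by omega), zero_mul]
  calc
    _ = ∑ t ∈ range n, ∑ i ∈ range (t + 1),
          (p + r).choose (r + i) * (p.choose (i + (t - i)) * q.choose (t - i)) := by
      refine sum_congr rfl fun t _ => ?_
      rw [mul_sum]
      refine sum_congr rfl fun i hi => ?_
      rw [mem_range] at hi
      rw [Nat.add_sub_cancel' (by omega)]
      ring
    _ = ∑ i ∈ range n, ∑ j ∈ range (n - i),
          (p + r).choose (r + i) * (p.choose (i + j) * q.choose j) :=
      sum_range_diag_flip n fun i j => (p + r).choose (r + i) * (p.choose (i + j) * q.choose j)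
    _ = ∑ i ∈ range n, (p + r).choose (r + i) *
          ∑ j ∈ range (n - i), p.choose (i + j) * q.choose j := by
      simp_rw [mul_sum]
    _ = ∑ i ∈ range (p + 1), (p + r).choose (p - i) * (p + q).choose (p - i) := by
      rw [← sum_subset (range_subset_range.2 hn) hvanish]
      refine sum_congr rfl fun i hi => ?_
      rw [mem_range] at hi
      rw [sum_range_choose_add_mul_choose p q i (n - i) (by omega) (by omega),
        Nat.choose_symm_of_eq_add (show p + r = r + i + (p - i) by omega)]
    _ = _ := sum_range_reflect (fun b => (p + r).choose b * (p + q).choose b) (p + 1)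

theorem fPoly_eval_one_general (l m : ℕ) (hl : 1 ≤ l) :
    ∑ k ∈ Finset.range (l + m), ∑ a ∈ Finset.range (k + 1),
        (l - 1).choose (k - a) * m.choose a *
          ∑ b ∈ Finset.Icc a k, (l + a - 1).choose b * (m - a).choose (k - b) =
      ∑ a ∈ Finset.range (m + 1), m.choose a *
        ∑ b ∈ Finset.range l, (l + a - 1).choose b * (l + m - a - 1).choose b := by
  obtain ⟨p, rfl⟩ : ∃ p, l = p + 1 := ⟨l - 1, by omega⟩
  set G : ℕ → ℕ → ℕ := fun a t =>
    m.choose a *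
      (p.choose t * ∑ i ∈ range (t + 1), (p + a).choose (a + i) * (m - a).choose (t - i))
  have hG : ∀ a, a ∉ range (m + 1) → ∀ t, G a t = 0 := fun a ha t => by
    rw [mem_range] at ha
    simp only [G, Nat.choose_eq_zero_of_lt (by omega : m < a), zero_mul]
  calc
    _ = ∑ k ∈ range (p + 1 + m), ∑ a ∈ range (k + 1), G a (k - a) := by
      refine sum_congr rfl fun k _ => sum_congr rfl fun a ha => ?_
      rw [mem_range] at ha
      rw [← Ico_add_one_right_eq_Icc, sum_Ico_eq_sum_range]
      simp only [G, Nat.add_sub_cancel, show k + 1 - a = k - a + 1 by omega,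
        show p + 1 + a - 1 = p + a by omega, Nat.sub_add_eq]
      ring
    _ = ∑ a ∈ range (p + 1 + m), ∑ t ∈ range (p + 1 + m - a), G a t :=
      sum_range_diag_flip _ G
    _ = ∑ a ∈ range (m + 1), ∑ t ∈ range (p + 1 + m - a), G a t := by
      refine (sum_subset (range_subset_range.2 (by omega)) fun a _ ha => ?_).symm
      exact sum_eq_zero fun t _ => hG a ha t
    _ = _ := by
      refine sum_congr rfl fun a ha => ?_
      rw [mem_range] at ha
      simp only [G, ← mul_sum]
      rw [sum_range_choose_mul_sum_choose_mul_choose p (m - a) a _ (by omega)]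
      simp only [show p + 1 + a - 1 = p + a by omega, show p + 1 + m - a - 1 = p + (m - a) by omega]

/-- For all positive integers `ℓ` and `m`,
`f_{ℓ,m}(1) = Σ_{α=0}^{m} C(m,α) Σ_{β=0}^{ℓ−1} C(ℓ+α−1,β) C(ℓ+m−α−1,β)`. -/
theorem fPoly_eval_one (l m : ℕ) (hl : 1 ≤ l) (hm : 1 ≤ m) :
    ∑ k ∈ Finset.range (l + m), ∑ a ∈ Finset.range (k + 1),
        (l - 1).choose (k - a) * m.choose a *
          ∑ b ∈ Finset.Icc a k, (l + a - 1).choose b * (m - a).choose (k - b) =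
      ∑ a ∈ Finset.range (m + 1), m.choose a *
        ∑ b ∈ Finset.range l, (l + a - 1).choose b * (l + m - a - 1).choose b :=
  fPoly_eval_one_general l m hl

end PQPaper
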